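/- arXiv:1906.03411 — 7 statements merged into one kernel-verified Lean document; each statement's English description precedes it below -/
import Mathlib

section
/- Let R be a Dedekind domain with quotient field K, let A be a central simple K-algebra and B a maximal R-order in A. If P and Q are distinct prime ideals of B, then PQ ∩ K = (P ∩ R) ∩ (Q ∩ R). -/
/-!
Distinct primes of `B` are comaximal. The contraction `p = P ∩ R` is a nonzero prime of the
Dedekind domain `R`, hence maximal, so `B/P` is a finite algebra over the field `R/p` and thus
Artinian. Primality of `P` makes `B/P` a prime ring; the Jacobson radical of an Artinian ring is
nilpotent, hence zero in a prime ring, so `B/P` is semisimple, and a nonzero two-sided ideal `J`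
of a semisimple prime ring is everything, since a complement `L` of `J` as a left ideal satisfies
`J * L ≤ J ⊓ L = ⊥`. Thus `P + Q = B` whenever `Q ⊄ P`.

Writing `1 = p + q` with `p ∈ P`, `q ∈ Q`, a central `x ∈ P ∩ Q` is `p x + x q ∈ PQ`. Conversely
`PQ ⊆ P ∩ Q ⊆ B`, and an element of `K` lying in the finitely generated `R`-module `B` is
integral over `R`, hence lies in `R`.
-/

/-- A two-sided ideal of the order `B` in `A`, viewed as an `R`-submodule of `A`. -/
def IsTwoSidedBIdeal {R A : Type*} [CommRing R] [Ring A] [Algebra R A]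
    (B : Subalgebra R A) (P : Submodule R A) : Prop :=
  P ≤ Subalgebra.toSubmodule B ∧ ∀ b ∈ B, ∀ p ∈ P, b * p ∈ P ∧ p * b ∈ P

/-- A prime ideal of the order `B`: a proper two-sided ideal `P` with `K·P = A` such that
for two-sided ideals `S, T ⊇ P`, `S·T ⊆ P` implies `S ⊆ P` or `T ⊆ P`. -/
def IsPrimeBIdeal {R : Type*} (K : Type*) {A : Type*} [CommRing R] [Field K] [Ring A]
    [Algebra R A] [Algebra K A] (B : Subalgebra R A) (P : Submodule R A) : Prop :=
  IsTwoSidedBIdeal B P ∧ P ≠ Subalgebra.toSubmodule B ∧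
    Submodule.span K (P : Set A) = ⊤ ∧
    ∀ S T : Submodule R A, IsTwoSidedBIdeal B S → IsTwoSidedBIdeal B T →
      P ≤ S → P ≤ T → S * T ≤ P → S ≤ P ∨ T ≤ P

def IsPrimeRing (Λ : Type*) [Ring Λ] : Prop :=
  ∀ a b : Λ, (∀ x, a * x * b = 0) → a = 0 ∨ b = 0

namespace IsPrimeRing

variable {Λ : Type*} [Ring Λ]

theorem mul_ne_bot (hΛ : IsPrimeRing Λ) {I J : Ideal Λ} [I.IsTwoSided] (hI : I ≠ ⊥)
    (hJ : J ≠ ⊥) : I * J ≠ ⊥ := by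
  obtain ⟨a, ha, ha0⟩ := Submodule.exists_mem_ne_zero_of_ne_bot hI
  obtain ⟨b, hb, hb0⟩ := Submodule.exists_mem_ne_zero_of_ne_bot hJ
  obtain ⟨x, hx⟩ : ∃ x, a * x * b ≠ 0 := by
    by_contra! h
    exact (hΛ a b h).elim ha0 hb0
  exact fun h ↦ hx <| (Submodule.eq_bot_iff _).1 h _ <|
    Ideal.mul_mem_mul (I.mul_mem_right x ha) hb

theorem pow_ne_bot (hΛ : IsPrimeRing Λ) {I : Ideal Λ} [I.IsTwoSided] (hI : I ≠ ⊥) :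
    ∀ n, I ^ (n + 1) ≠ ⊥
  | 0 => by rwa [zero_add, Submodule.pow_one]
  | n + 1 => by rw [Ideal.IsTwoSided.pow_succ]; exact hΛ.mul_ne_bot hI (hΛ.pow_ne_bot hI n)

theorem jacobson_eq_bot [IsArtinianRing Λ] (hΛ : IsPrimeRing Λ) : Ring.jacobson Λ = ⊥ := by
  by_contra h
  obtain ⟨n, hn⟩ := IsSemiprimaryRing.isNilpotent (R := Λ)
  cases n with
  | zero =>
    rw [Submodule.pow_zero, Ideal.one_eq_top] at hn
    exact h (eq_bot_iff.2 (le_top.trans hn.le))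
  | succ n => exact hΛ.pow_ne_bot h n hn

theorem eq_top_of_ne_bot [IsArtinianRing Λ] (hΛ : IsPrimeRing Λ) {J : Ideal Λ} [J.IsTwoSided]
    (hJ : J ≠ ⊥) : J = ⊤ := by
  have := IsArtinianRing.isSemisimpleRing_iff_jacobson.2 hΛ.jacobson_eq_bot
  obtain ⟨L, hJL⟩ := exists_isCompl J
  suffices L = ⊥ by simpa [this] using hJL.sup_eq_top
  by_contra hL
  refine hΛ.mul_ne_bot hJ hL (eq_bot_iff.2 ?_)
  exact Ideal.mul_le.2 fun a ha b hb ↦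
    hJL.disjoint.le_bot ⟨J.mul_mem_right b ha, L.mul_mem_left a hb⟩

end IsPrimeRing

theorem isArtinianRing_of_le_ker {R S : Type*} [CommRing R] [Ring S] [Algebra R S]
    [Module.Finite R S] (p : Ideal R) [p.IsMaximal]
    (hp : p ≤ RingHom.ker (algebraMap R S)) : IsArtinianRing S := by
  let := Ideal.Quotient.field p
  let : Algebra (R ⧸ p) S := (Ideal.Quotient.lift p (algebraMap R S) hp).toAlgebra'
    fun r x ↦ by
      obtain ⟨r, rfl⟩ := Ideal.Quotient.mk_surjective r
      exact Algebra.commutes r x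
  have : IsScalarTower R (R ⧸ p) S := IsScalarTower.of_algebraMap_eq fun _ ↦ rfl
  have := Module.Finite.of_restrictScalars_finite R (R ⧸ p) S
  exact IsArtinianRing.of_finite (R ⧸ p) S

theorem IsIntegrallyClosed.exists_algebraMap_eq_of_algebraMap_mem {R K A : Type*} [CommRing R]
    [IsIntegrallyClosed R] [Field K] [Algebra R K] [IsFractionRing R K] [Ring A]
    [Algebra K A] [Algebra R A] [IsScalarTower R K A] {B : Subalgebra R A}
    (hB : Subalgebra.toSubmodule B ≠ ⊥) (hBfg : (Subalgebra.toSubmodule B).FG) {x : K}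
    (hx : algebraMap K A x ∈ B) : ∃ r : R, algebraMap R K r = x :=
  IsIntegrallyClosed.isIntegral_iff.1 <| isIntegral_of_smul_mem_submodule _ hB hBfg x
    fun _ hb ↦ by rw [Algebra.smul_def]; exact B.mul_mem hx hb

open Submodule

section BIdeal

variable {R A : Type*} [CommRing R] [Ring A] [Algebra R A] {B : Subalgebra R A}
  {P : Submodule R A}

local notation "B'" => Subalgebra.toSubmodule B

theorem isTwoSidedBIdeal_iff :
    IsTwoSidedBIdeal B P ↔ P ≤ B' ∧ B' * P ≤ P ∧ P * B' ≤ P := by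
  simp only [IsTwoSidedBIdeal, mul_le]
  exact and_congr_right fun _ ↦ ⟨fun h ↦ ⟨fun b hb p hp ↦ (h b hb p hp).1,
    fun p hp b hb ↦ (h b hb p hp).2⟩, fun h b hb p hp ↦ ⟨h.1 b hb p hp, h.2 p hp b hb⟩⟩

theorem IsTwoSidedBIdeal.mul_le_left {Q : Submodule R A} (hP : IsTwoSidedBIdeal B P)
    (hQ : Q ≤ B') : P * Q ≤ P :=
  (mul_le_mul' le_rfl hQ).trans (isTwoSidedBIdeal_iff.1 hP).2.2

theorem IsTwoSidedBIdeal.mul_le_right {Q : Submodule R A} (hP : IsTwoSidedBIdeal B P)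
    (hQ : Q ≤ B') : Q * P ≤ P :=
  (mul_le_mul' hQ le_rfl).trans (isTwoSidedBIdeal_iff.1 hP).2.1

theorem IsTwoSidedBIdeal.sup_span (hP : IsTwoSidedBIdeal B P) {a : A} (ha : a ∈ B) :
    IsTwoSidedBIdeal B (P ⊔ B' * span R {a} * B') := by
  have hBB : B' * B' = B' := B.isIdempotentElem_toSubmodule
  have haB : span R {a} ≤ B' := span_le.2 (Set.singleton_subset_iff.2 ha)
  refine isTwoSidedBIdeal_iff.2 ⟨sup_le (isTwoSidedBIdeal_iff.1 hP).1 ?_, ?_, ?_⟩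
  · calc B' * span R {a} * B' ≤ B' * B' * B' := by gcongr
      _ = B' := by rw [hBB, hBB]
  · rw [Submodule.mul_sup, ← mul_assoc, ← mul_assoc, hBB]
    exact sup_le_sup (isTwoSidedBIdeal_iff.1 hP).2.1 le_rfl
  · rw [Submodule.sup_mul, mul_assoc _ B', hBB]
    exact sup_le_sup (isTwoSidedBIdeal_iff.1 hP).2.2 le_rfl

theorem mem_sup_span (a : A) : a ∈ P ⊔ B' * span R {a} * B' := by
  have h1 : (1 : A) ∈ B' := B.one_mem
  simpa using mem_sup_right (mul_mem_mul (mul_mem_mul h1 (mem_span_singleton_self a)) h1)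

def IsTwoSidedBIdeal.toTwoSidedIdeal (hP : IsTwoSidedBIdeal B P) : TwoSidedIdeal B :=
  .mk' {b | (b : A) ∈ P} P.zero_mem P.add_mem P.neg_mem (fun {x _} hy ↦ (hP.2 x x.2 _ hy).1)
    (fun {_ y} hx ↦ (hP.2 y y.2 _ hx).2)

theorem IsTwoSidedBIdeal.mem_toTwoSidedIdeal (hP : IsTwoSidedBIdeal B P) {b : B} :
    b ∈ hP.toTwoSidedIdeal.asIdeal ↔ (b : A) ∈ P := by
  rw [TwoSidedIdeal.mem_asIdeal, toTwoSidedIdeal, TwoSidedIdeal.mem_mk']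
  rfl

theorem IsTwoSidedBIdeal.mk_eq_zero (hP : IsTwoSidedBIdeal B P) {b : B} :
    Ideal.Quotient.mk hP.toTwoSidedIdeal.asIdeal b = 0 ↔ (b : A) ∈ P := by
  rw [Ideal.Quotient.eq_zero_iff_mem, hP.mem_toTwoSidedIdeal]

end BIdeal

section PrimeBIdeal

variable {R K A : Type*} [CommRing R] [Field K] [Ring A] [Algebra R A] [Algebra K A]
  {B : Subalgebra R A} {P Q : Submodule R A}

local notation "B'" => Subalgebra.toSubmodule B

theorem IsPrimeBIdeal.mem_or_mem (hP : IsPrimeBIdeal K B P) {a b : A} (ha : a ∈ B)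
    (hb : b ∈ B) (h : ∀ x ∈ B, a * x * b ∈ P) : a ∈ P ∨ b ∈ P := by
  have hBB : B' * B' = B' := B.isIdempotentElem_toSubmodule
  have hab : span R {a} * B' * span R {b} ≤ P := mul_le.2 fun y hy z hz ↦ by
    obtain ⟨x, hx, rfl⟩ := mem_span_singleton_mul.1 hy
    obtain ⟨r, rfl⟩ := mem_span_singleton.1 hz
    rw [mul_smul_comm]
    exact P.smul_mem r (h x hx)
  have hprod : (P ⊔ B' * span R {a} * B') * (P ⊔ B' * span R {b} * B') ≤ P := by
    rw [Submodule.sup_mul]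
    refine sup_le (hP.1.mul_le_left (hP.1.sup_span hb).1) ?_
    rw [Submodule.mul_sup]
    refine sup_le (hP.1.mul_le_right (le_sup_right.trans (hP.1.sup_span ha).1)) ?_
    calc B' * span R {a} * B' * (B' * span R {b} * B')
        = B' * (span R {a} * (B' * B') * span R {b}) * B' := by simp only [mul_assoc]
      _ = B' * (span R {a} * B' * span R {b}) * B' := by rw [hBB]
      _ ≤ B' * P * B' := by gcongr
      _ ≤ P := (mul_le_mul' (hP.1.mul_le_right le_rfl) le_rfl).trans (hP.1.mul_le_left le_rfl)
  refine (hP.2.2.2 _ _ (hP.1.sup_span ha) (hP.1.sup_span hb) le_sup_left le_sup_left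
    hprod).imp (· (mem_sup_span a)) (· (mem_sup_span b))

theorem IsPrimeBIdeal.isPrimeRing_quotient (hP : IsPrimeBIdeal K B P) :
    IsPrimeRing (B ⧸ hP.1.toTwoSidedIdeal.asIdeal) := by
  intro a b h
  obtain ⟨a, rfl⟩ := Ideal.Quotient.mk_surjective a
  obtain ⟨b, rfl⟩ := Ideal.Quotient.mk_surjective b
  simp only [hP.1.mk_eq_zero]
  refine hP.mem_or_mem a.2 b.2 fun x hx ↦ ?_
  simpa [← map_mul, hP.1.mk_eq_zero] using h (Ideal.Quotient.mk _ ⟨x, hx⟩)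

theorem IsPrimeBIdeal.comap_isPrime (hP : IsPrimeBIdeal K B P) :
    Ideal.IsPrime (P.comap (Algebra.linearMap R A)) := by
  refine Ideal.isPrime_iff.2 ⟨fun h1 ↦ hP.2.1 ?_, fun {r s} hrs ↦ ?_⟩
  · have h1 : (1 : A) ∈ P := by simpa using (Ideal.eq_top_iff_one _).1 h1
    exact le_antisymm hP.1.1 fun b hb ↦ mul_one b ▸ (hP.1.2 b hb 1 h1).1
  · simp only [Submodule.mem_comap, Algebra.linearMap_apply, map_mul] at hrs ⊢
    refine hP.mem_or_mem (B.algebraMap_mem r) (B.algebraMap_mem s) fun x hx ↦ ?_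
    rw [Algebra.commutes r x, mul_assoc]
    exact (hP.1.2 x hx _ hrs).1

theorem IsPrimeBIdeal.comap_ne_bot [Nontrivial R] [Algebra R K] [IsFractionRing R K]
    [IsScalarTower R K A] (hP : IsPrimeBIdeal K B P) :
    P.comap (Algebra.linearMap R A) ≠ ⊥ := by
  obtain ⟨y, hy, z, hz⟩ := (IsLocalization.mem_span_iff (nonZeroDivisors R)).1
    (hP.2.2.1 ▸ Submodule.mem_top : (1 : A) ∈ Submodule.span K (P : Set A))
  rw [Submodule.span_eq] at hy
  refine (Submodule.ne_bot_iff _).2 ⟨z, ?_, nonZeroDivisors.coe_ne_zero z⟩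
  rw [Submodule.mem_comap, Algebra.linearMap_apply, Algebra.algebraMap_eq_smul_one, hz,
    ← algebraMap_smul K, smul_smul, IsLocalization.mk'_spec', map_one, one_smul]
  exact hy

theorem IsPrimeBIdeal.one_mem_sup_of_not_le [IsDedekindDomain R] [Algebra R K]
    [IsFractionRing R K] [IsScalarTower R K A] (hBfg : (Subalgebra.toSubmodule B).FG)
    (hP : IsPrimeBIdeal K B P) (hQ : IsTwoSidedBIdeal B Q) (hQP : ¬Q ≤ P) :
    (1 : A) ∈ P ⊔ Q := by
  set I := hP.1.toTwoSidedIdeal.asIdeal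
  have : Module.Finite R B := Module.Finite.iff_fg.2 hBfg
  have : Module.Finite R (B ⧸ I) := .of_surjective (Ideal.Quotient.mkₐ R I).toLinearMap
    Ideal.Quotient.mk_surjective
  have := hP.comap_isPrime.isMaximal hP.comap_ne_bot
  have : IsArtinianRing (B ⧸ I) := isArtinianRing_of_le_ker (P.comap (Algebra.linearMap R A))
    fun r hr ↦ (hP.1.mk_eq_zero (b := algebraMap R B r)).2 hr
  have hJ : hQ.toTwoSidedIdeal.asIdeal.map (Ideal.Quotient.mk I) ≠ ⊥ := by
    obtain ⟨q, hq, hqP⟩ := SetLike.not_le_iff_exists.1 hQP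
    refine (Submodule.ne_bot_iff _).2 ⟨Ideal.Quotient.mk I ⟨q, hQ.1 hq⟩,
      Ideal.mem_map_of_mem _ (hQ.mem_toTwoSidedIdeal.2 hq), ?_⟩
    rwa [Ne, hP.1.mk_eq_zero]
  have h1 : (1 : B) ∈ hQ.toTwoSidedIdeal.asIdeal ⊔ I := by
    rw [← Ideal.mem_quotient_iff_mem_sup, hP.isPrimeRing_quotient.eq_top_of_ne_bot hJ]
    trivial
  obtain ⟨q, hq, p, hp, hqp⟩ := Submodule.mem_sup.1 h1
  exact Submodule.mem_sup.2 ⟨p, hP.1.mem_toTwoSidedIdeal.1 hp, q, hQ.mem_toTwoSidedIdeal.1 hq,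
    by rw [add_comm]; exact congrArg Subtype.val hqp⟩

theorem IsPrimeBIdeal.one_mem_sup_of_ne [IsDedekindDomain R] [Algebra R K] [IsFractionRing R K]
    [IsScalarTower R K A] (hBfg : (Subalgebra.toSubmodule B).FG) (hP : IsPrimeBIdeal K B P)
    (hQ : IsPrimeBIdeal K B Q) (hPQ : P ≠ Q) :
    (1 : A) ∈ P ⊔ Q := by
  by_cases hQP : Q ≤ P
  · rw [sup_comm]
    exact hQ.one_mem_sup_of_not_le hBfg hP.1 fun hPQ' ↦ hPQ (le_antisymm hPQ' hQP)
  · exact hP.one_mem_sup_of_not_le hBfg hQ.1 hQP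

end PrimeBIdeal

theorem stmt_6_general {R K A : Type*} [CommRing R] [IsDedekindDomain R]
    [Field K] [Algebra R K] [IsFractionRing R K]
    [Ring A] [Algebra K A] [Algebra R A] [IsScalarTower R K A]
    (B : Subalgebra R A)
    (hBfg : (Subalgebra.toSubmodule B).FG)
    (P Q : Submodule R A) (hP : IsPrimeBIdeal K B P) (hQ : IsPrimeBIdeal K B Q)
    (hPQ : P ≠ Q) :
    ∀ x : K, algebraMap K A x ∈ P * Q ↔
      (algebraMap K A x ∈ P ∧ algebraMap K A x ∈ Q ∧ ∃ r : R, algebraMap R K r = x) := by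
  intro x
  have hB : Subalgebra.toSubmodule B ≠ ⊥ := fun h ↦ hP.2.1 (le_antisymm hP.1.1 (h ▸ bot_le))
  have hPQ_le_P : P * Q ≤ P := hP.1.mul_le_left hQ.1.1
  have hPQ_le_Q : P * Q ≤ Q := hQ.1.mul_le_right hP.1.1
  constructor
  · intro h
    exact ⟨hPQ_le_P h, hPQ_le_Q h,
      IsIntegrallyClosed.exists_algebraMap_eq_of_algebraMap_mem hB hBfg (hP.1.1 (hPQ_le_P h))⟩
  · rintro ⟨hxP, hxQ, -⟩
    obtain ⟨p, hp, q, hq, hpq⟩ := mem_sup.1 (hP.one_mem_sup_of_ne hBfg hQ hPQ)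
    have hx : algebraMap K A x = p * algebraMap K A x + algebraMap K A x * q := by
      rw [← Algebra.commutes, ← mul_add, hpq, mul_one]
    exact hx ▸ add_mem (mul_mem_mul hp hxQ) (mul_mem_mul hxP hq)

/-- Let `R` be a Dedekind domain with quotient field `K`, `A` a central simple `K`-algebra
and `B` a maximal `R`-order in `A`. If `P ≠ Q` are prime ideals of `B`, then
`PQ ∩ K = (P ∩ R) ∩ (Q ∩ R)`. -/
theorem stmt_6 {R K A : Type*} [CommRing R] [IsDomain R] [IsDedekindDomain R]
    [Field K] [Algebra R K] [IsFractionRing R K]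
    [Ring A] [Algebra K A] [Algebra R A] [IsScalarTower R K A]
    [FiniteDimensional K A] [Algebra.IsCentral K A] [IsSimpleRing A]
    (B : Subalgebra R A)
    (hBfg : (Subalgebra.toSubmodule B).FG)
    (hBfull : Submodule.span K (B : Set A) = ⊤)
    (hBmax : ∀ C : Subalgebra R A, (Subalgebra.toSubmodule C).FG →
      Submodule.span K (C : Set A) = ⊤ → B ≤ C → C = B)
    (P Q : Submodule R A) (hP : IsPrimeBIdeal K B P) (hQ : IsPrimeBIdeal K B Q)
    (hPQ : P ≠ Q) :
    ∀ x : K, algebraMap K A x ∈ P * Q ↔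
      (algebraMap K A x ∈ P ∧ algebraMap K A x ∈ Q ∧ ∃ r : R, algebraMap R K r = x) :=
  stmt_6_general B hBfg P Q hP hQ hPQ
end

section
/- Let O_v be a discrete valuation ring with fraction field K and let F^vK denote the v-adic filtration: F^v_nK = {x ∈ K : v(x) ≥ -n} (so F^v_0K = O_v). Then every irreducible left F^vK-glider ideal L inside K equals F^v_nK for some n ∈ ℤ, with chain L_i = F^v_{n-i}K. Consequently, the glider Brauer-Severi set GBS_{F^v}(K) is in bijection with ℤ. -/
/-- A ℤ-filtration on a ring `A` by additive subgroups (= ℤ-submodules):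
an ascending chain with `F n * F m ⊆ F (n+m)` and `1 ∈ F 0`. -/
def IsIntFiltration {A : Type*} [Ring A] (F : ℤ → Submodule ℤ A) : Prop :=
  Monotone F ∧ (1 : A) ∈ F 0 ∧
    ∀ (n m : ℤ), ∀ x ∈ F n, ∀ y ∈ F m, x * y ∈ F (n + m)

/-- A left `F`-glider ideal inside `A`: a descending chain of additive subgroups
with `F i * M j ⊆ M (j - i)` for `i ≤ j`. -/
def IsGlider {A : Type*} [Ring A] (F : ℤ → Submodule ℤ A) (M : ℕ → Submodule ℤ A) : Prop :=
  Antitone M ∧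
    ∀ (i : ℤ) (j : ℕ), i ≤ (j : ℤ) →
      ∀ a ∈ F i, ∀ m ∈ M j, a * m ∈ M ((j : ℤ) - i).toNat

/-- The body of a glider: `B(M) = ⋂ᵢ Mᵢ`. -/
def gliderBody {A : Type*} [Ring A] (M : ℕ → Submodule ℤ A) : Submodule ℤ A := ⨅ i, M i

/-- Triviality of a subglider `N` of `M`: type T1, T2 or T3. -/
def IsTrivialSubglider {A : Type*} [Ring A] (M N : ℕ → Submodule ℤ A) : Prop :=
  (∃ n, N n = gliderBody N ∧ M n ≠ gliderBody M) ∨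
  (∃ n, N n = ⊥ ∧ M n ≠ ⊥) ∨
  (∃ α : ℕ → ℕ, Monotone α ∧ (∀ n, N n = M (α n)) ∧
      ∀ m n : ℕ, m ≤ n → (α (n - m) : ℤ) ≤ (α n : ℤ) - (m : ℤ))

/-- An irreducible glider: every subglider is trivial. -/
def IsIrreducibleGlider {A : Type*} [Ring A] (F : ℤ → Submodule ℤ A)
    (M : ℕ → Submodule ℤ A) : Prop :=
  IsGlider F M ∧
    ∀ N : ℕ → Submodule ℤ A, IsGlider F N → (∀ i, N i ≤ M i) → IsTrivialSubglider M N

/-!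
Every nonzero `x ∈ K` is a unit of some degree `d` for the `v`-adic filtration (`x ∈ F d`,
`x⁻¹ ∈ F (-d)`), so a nonzero `O_v`-submodule `L ≠ K` of `K` is `F m` for the largest `m` with
`F m ⊆ L`. In a glider `L` with `0 ≠ L 0 ≠ K` every `L i` is such a submodule, say `F (m i)`, and
multiplying by units of degree `±i` shows `m i = m 0 - i`. Irreducibility excludes `L 0 = K`,
since then the chain `F (-i)` would be a nontrivial subglider. Conversely, a subglider of
`F (n - i)` is either zero or a chain `F (k - i)` with `k ≤ n`, i.e. a shift of type T3.
-/

/-- The properties of the `v`-adic filtration `F n = {x | -n ≤ v x}` that the argument uses;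
in `exists_unit`, `π` is a power of a uniformizer. -/
structure IsDiscreteValuationFiltration {K : Type*} [Field K] (F : ℤ → Submodule ℤ K) : Prop where
  strictMono : StrictMono F
  mul_mem : ∀ {i j : ℤ} {x y : K}, x ∈ F i → y ∈ F j → x * y ∈ F (i + j)
  exists_unit : ∀ i : ℤ, ∃ π : K, π ≠ 0 ∧ π ∈ F i ∧ π⁻¹ ∈ F (-i)
  exists_degree : ∀ x : K, x ≠ 0 → ∃ d : ℤ, x ∈ F d ∧ x⁻¹ ∈ F (-d)

namespace IsGlider

variable {A : Type*} [Ring A] {F : ℤ → Submodule ℤ A} {L : ℕ → Submodule ℤ A}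

theorem mul_mem (hL : IsGlider F L) {i j : ℕ} {a x : A} (ha : a ∈ F (i - j)) (hx : x ∈ L i) :
    a * x ∈ L j := by
  have h := hL.2 (i - j) i (by omega) a ha x hx
  rwa [sub_sub_cancel, Int.toNat_natCast] at h

theorem mul_mem_of_mem_zero (hL : IsGlider F L) {j : ℕ} {a x : A} (ha : a ∈ F 0)
    (hx : x ∈ L j) : a * x ∈ L j :=
  hL.mul_mem (by rwa [sub_self]) hx

end IsGlider

namespace IsDiscreteValuationFiltration

variable {K : Type*} [Field K] {F : ℤ → Submodule ℤ K} (hF : IsDiscreteValuationFiltration F)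
include hF

theorem le_iff {a b : ℤ} : F a ≤ F b ↔ a ≤ b :=
  hF.strictMono.le_iff_le

theorem ne_bot (n : ℤ) : F n ≠ ⊥ :=
  fun h => not_lt_bot (h ▸ hF.strictMono (sub_one_lt n))

theorem ne_top (n : ℤ) : F n ≠ ⊤ :=
  fun h => not_top_lt (h ▸ hF.strictMono (lt_add_one n))

theorem exists_mul_eq {i n : ℤ} {y : K} (hy : y ∈ F (i + n)) :
    ∃ a ∈ F i, ∃ b ∈ F n, a * b = y := by
  obtain ⟨π, hπ0, hπ, hπinv⟩ := hF.exists_unit i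
  refine ⟨π, hπ, π⁻¹ * y, ?_, mul_inv_cancel_left₀ hπ0 y⟩
  simpa only [neg_add_cancel_left] using hF.mul_mem hπinv hy

theorem exists_mem_le_of_mem {L : Submodule ℤ K} (hL : ∀ a ∈ F 0, ∀ x ∈ L, a * x ∈ L)
    {x : K} (hxL : x ∈ L) (hx0 : x ≠ 0) : ∃ d, x ∈ F d ∧ F d ≤ L := by
  obtain ⟨d, hx, hxinv⟩ := hF.exists_degree x hx0
  refine ⟨d, hx, fun y hy => ?_⟩
  have hyx : y * x⁻¹ ∈ F 0 := by simpa only [add_neg_cancel] using hF.mul_mem hy hxinv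
  simpa only [inv_mul_cancel_right₀ hx0] using hL _ hyx x hxL

theorem exists_eq_of_mul_mem {L : Submodule ℤ K} (hL : ∀ a ∈ F 0, ∀ x ∈ L, a * x ∈ L)
    (hbot : L ≠ ⊥) (htop : L ≠ ⊤) : ∃ m, L = F m := by
  obtain ⟨x, hxL, hx0⟩ := Submodule.exists_mem_ne_zero_of_ne_bot hbot
  obtain ⟨d₀, -, hd₀⟩ := hF.exists_mem_le_of_mem hL hxL hx0
  obtain ⟨z, hz⟩ : ∃ z, z ∉ L := by
    by_contra! h
    exact htop (eq_top_iff.2 fun z _ => h z)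
  obtain ⟨e, hze, -⟩ := hF.exists_degree z fun h => hz (h ▸ L.zero_mem)
  have hbdd : ∀ n, F n ≤ L → n ≤ e := fun n hn => by
    by_contra! h
    exact hz (hn (hF.strictMono.monotone h.le hze))
  obtain ⟨m, hmL, hmax⟩ := Int.exists_greatest_of_bdd ⟨e, hbdd⟩ ⟨d₀, hd₀⟩
  refine ⟨m, le_antisymm (fun y hyL => ?_) hmL⟩
  by_cases hy0 : y = 0
  · exact hy0 ▸ (F m).zero_mem
  obtain ⟨d, hyd, hdL⟩ := hF.exists_mem_le_of_mem hL hyL hy0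
  exact hF.strictMono.monotone (hmax d hdL) hyd

variable {L : ℕ → Submodule ℤ K}

theorem glider_ne_bot (hL : IsGlider F L) (h0 : L 0 ≠ ⊥) (j : ℕ) : L j ≠ ⊥ := by
  obtain ⟨x, hxL, hx0⟩ := Submodule.exists_mem_ne_zero_of_ne_bot h0
  obtain ⟨π, hπ0, hπ, -⟩ := hF.exists_unit ((0 : ℕ) - j)
  exact (Submodule.ne_bot_iff _).2 ⟨π * x, hL.mul_mem hπ hxL, mul_ne_zero hπ0 hx0⟩

theorem glider_eq_top (hL : IsGlider F L) (h0 : L 0 = ⊤) (j : ℕ) : L j = ⊤ := by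
  obtain ⟨π, hπ0, hπ, -⟩ := hF.exists_unit ((0 : ℕ) - j)
  refine eq_top_iff.2 fun y _ => ?_
  simpa only [mul_inv_cancel_left₀ hπ0] using
    hL.mul_mem hπ (h0 ▸ Submodule.mem_top : π⁻¹ * y ∈ L 0)

theorem glider_index_le (hL : IsGlider F L) {i j : ℕ} {p q : ℤ} (hi : L i = F p)
    (hj : L j = F q) : p + (i - j) ≤ q := by
  refine hF.le_iff.1 fun y hy => ?_
  obtain ⟨a, ha, b, hb, rfl⟩ := hF.exists_mul_eq (by rwa [add_comm] at hy)
  exact hj ▸ hL.mul_mem ha (hi ▸ hb)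

theorem glider_exists_eq_sub (hL : IsGlider F L) (hbot : L 0 ≠ ⊥) (htop : L 0 ≠ ⊤) :
    ∃ n : ℤ, ∀ i : ℕ, L i = F (n - i) := by
  have hm : ∀ i, ∃ m, L i = F m := fun i =>
    hF.exists_eq_of_mul_mem (fun _ ha _ hx => hL.mul_mem_of_mem_zero ha hx)
      (hF.glider_ne_bot hL hbot i) (ne_top_of_le_ne_top htop (hL.1 (Nat.zero_le i)))
  choose m hm using hm
  refine ⟨m 0, fun i => ?_⟩
  have h₁ := hF.glider_index_le hL (hm i) (hm 0)
  have h₂ := hF.glider_index_le hL (hm 0) (hm i)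
  rw [hm i]
  congr 1
  push_cast at h₁ h₂
  omega

theorem isGlider_sub (n : ℤ) : IsGlider F fun i : ℕ => F (n - i) := by
  refine ⟨fun i j hij => hF.strictMono.monotone (by omega), fun i j hij a ha x hx => ?_⟩
  have h := hF.mul_mem ha hx
  rwa [show i + (n - j) = n - (((j : ℤ) - i).toNat : ℕ) by omega] at h

theorem isIrreducibleGlider_sub (n : ℤ) : IsIrreducibleGlider F fun i : ℕ => F (n - i) := by
  refine ⟨hF.isGlider_sub n, fun N hN hNle => ?_⟩
  by_cases hN0 : N 0 = ⊥
  · exact Or.inr (Or.inl ⟨0, hN0, hF.ne_bot _⟩)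
  obtain ⟨k, hk⟩ :=
    hF.glider_exists_eq_sub hN hN0 (ne_top_of_le_ne_top (hF.ne_top _) (hNle 0))
  have hkn : k ≤ n := by
    have h := hNle 0
    rw [hk 0] at h
    simpa using hF.le_iff.1 h
  refine Or.inr (Or.inr ⟨fun i => i + (n - k).toNat, fun a b hab => by dsimp only; omega,
    fun i => ?_, fun a b hab => by dsimp only; omega⟩)
  rw [hk i]
  dsimp only
  congr 1
  omega

theorem zero_ne_top_of_isIrreducibleGlider (hL : IsIrreducibleGlider F L) : L 0 ≠ ⊤ := by
  intro h0
  have hall := hF.glider_eq_top hL.1 h0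
  rcases hL.2 _ (hF.isGlider_sub 0) fun i => (hall i).symm ▸ le_top with
    ⟨j, hj, -⟩ | ⟨j, hj, -⟩ | ⟨α, -, hα, -⟩
  · -- the body lies in `F (-(j + 1)) ⊊ F (-j)`
    have h := hF.le_iff.1 (hj.le.trans (iInf_le _ (j + 1)))
    push_cast at h
    omega
  · exact hF.ne_bot _ hj
  · exact hF.ne_top _ ((hα 0).trans (hall _))

theorem isIrreducibleGlider_and_ne_bot_iff :
    IsIrreducibleGlider F L ∧ L 0 ≠ ⊥ ↔ ∃ n : ℤ, ∀ i : ℕ, L i = F (n - i) := by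
  constructor
  · rintro ⟨hL, hbot⟩
    exact hF.glider_exists_eq_sub hL.1 hbot (hF.zero_ne_top_of_isIrreducibleGlider hL)
  · rintro ⟨n, hn⟩
    obtain rfl : L = fun i : ℕ => F (n - i) := funext hn
    exact ⟨hF.isIrreducibleGlider_sub n, hF.ne_bot _⟩

end IsDiscreteValuationFiltration

section Valuation

variable {K : Type*} [Field K] {v : K → WithTop ℤ}

theorem exists_val_eq_coe (hv0 : ∀ x : K, v x = ⊤ ↔ x = 0) {x : K} (hx : x ≠ 0) :
    ∃ c : ℤ, v x = c :=
  (WithTop.ne_top_iff_exists.1 (mt (hv0 x).1 hx)).imp fun _ h => h.symm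

theorem val_inv_of_val_eq (hv0 : ∀ x : K, v x = ⊤ ↔ x = 0)
    (hvmul : ∀ x y : K, v (x * y) = v x + v y) {x : K} {c : ℤ} (hx : v x = c) :
    v x⁻¹ = (-c : ℤ) := by
  have hx0 : x ≠ 0 := by
    rintro rfl
    simp [(hv0 0).2 rfl] at hx
  obtain ⟨e, he⟩ := exists_val_eq_coe hv0 (one_ne_zero : (1 : K) ≠ 0)
  obtain ⟨f, hf⟩ := exists_val_eq_coe hv0 (inv_ne_zero hx0)
  have h₁ := hvmul 1 1
  have h₂ := hvmul x x⁻¹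
  rw [one_mul, he] at h₁
  rw [mul_inv_cancel₀ hx0, he, hx, hf] at h₂
  norm_cast at h₁ h₂
  rw [hf]
  congr 1
  omega

theorem isDiscreteValuationFiltration_of_val (hv0 : ∀ x : K, v x = ⊤ ↔ x = 0)
    (hvmul : ∀ x y : K, v (x * y) = v x + v y) (hsurj : ∀ n : ℤ, ∃ x : K, v x = (n : WithTop ℤ))
    {F : ℤ → Submodule ℤ K} (hF : ∀ (n : ℤ) (x : K), x ∈ F n ↔ ((-n : ℤ) : WithTop ℤ) ≤ v x) :
    IsDiscreteValuationFiltration F := by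
  have hunit : ∀ {x : K} {c : ℤ}, v x = c → x ∈ F (-c) ∧ x⁻¹ ∈ F c := fun hx => by
    simp [hF, hx, val_inv_of_val_eq hv0 hvmul hx]
  have hne : ∀ {x : K} {c : ℤ}, v x = c → x ≠ 0 := fun hx h => by
    simp [h, (hv0 0).2 rfl] at hx
  have hmono : Monotone F := fun a b hab x hx =>
    (hF b x).2 ((WithTop.coe_le_coe.2 (by omega)).trans ((hF a x).1 hx))
  have hle : ∀ a b, F a ≤ F b → a ≤ b := fun a b hab => by
    obtain ⟨x, hx⟩ := hsurj (-a)
    have h := (hF b x).1 (hab (by simpa using (hunit hx).1))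
    rw [hx] at h
    norm_cast at h
    omega
  refine ⟨hmono.strictMono_of_injective fun a b h => le_antisymm (hle a b h.le) (hle b a h.ge),
    fun {i j x y} hx hy => ?_, fun i => ?_, fun x hx => ?_⟩
  · rw [hF] at hx hy ⊢
    rw [hvmul, neg_add, WithTop.coe_add]
    exact add_le_add hx hy
  · obtain ⟨π, hπ⟩ := hsurj (-i)
    exact ⟨π, hne hπ, by simpa using hunit hπ⟩
  · obtain ⟨c, hc⟩ := exists_val_eq_coe hv0 hx
    exact ⟨-c, by simpa using hunit hc⟩

end Valuation

theorem stmt_7_general {K : Type*} [Field K] (v : K → WithTop ℤ)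
    (hv0 : ∀ x : K, v x = ⊤ ↔ x = 0)
    (hvmul : ∀ x y : K, v (x * y) = v x + v y)
    (hsurj : ∀ n : ℤ, ∃ x : K, v x = (n : WithTop ℤ))
    (F : ℤ → Submodule ℤ K)
    (hF : ∀ (n : ℤ) (x : K), x ∈ F n ↔ ((-n : ℤ) : WithTop ℤ) ≤ v x) :
    (∀ L : ℕ → Submodule ℤ K,
        (IsIrreducibleGlider F L ∧ L 0 ≠ ⊥) ↔ ∃ n : ℤ, ∀ i : ℕ, L i = F (n - (i : ℤ))) ∧
    Function.Injective (fun n : ℤ => (fun i : ℕ => F (n - (i : ℤ)))) := by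
  have hFv := isDiscreteValuationFiltration_of_val hv0 hvmul hsurj hF
  refine ⟨fun L => hFv.isIrreducibleGlider_and_ne_bot_iff, fun a b h => ?_⟩
  exact hFv.strictMono.injective (by simpa using congrFun h 0)

/-- For a discrete valuation `v` on a field `K` with valuation ring `O_v = F 0` and
`F n = {x : v x ≥ -n}` the `v`-adic filtration, the irreducible left
`F`-glider ideals in `K` are precisely the chains `i ↦ F (n - i)` for `n : ℤ`;
so `GBS_{F^v}(K)` is in bijection with `ℤ`. -/
theorem stmt_7 {K : Type*} [Field K] (v : K → WithTop ℤ)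
    (hv0 : ∀ x : K, v x = ⊤ ↔ x = 0)
    (hvmul : ∀ x y : K, v (x * y) = v x + v y)
    (hvadd : ∀ x y : K, min (v x) (v y) ≤ v (x + y))
    (hsurj : ∀ n : ℤ, ∃ x : K, v x = (n : WithTop ℤ))
    (F : ℤ → Submodule ℤ K)
    (hF : ∀ (n : ℤ) (x : K), x ∈ F n ↔ ((-n : ℤ) : WithTop ℤ) ≤ v x) :
    (∀ L : ℕ → Submodule ℤ K,
        (IsIrreducibleGlider F L ∧ L 0 ≠ ⊥) ↔ ∃ n : ℤ, ∀ i : ℕ, L i = F (n - (i : ℤ))) ∧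
    Function.Injective (fun n : ℤ => (fun i : ℕ => F (n - (i : ℤ)))) :=
  stmt_7_general v hv0 hvmul hsurj F hF
end

section
/- Let A be a central simple algebra over a field K with an exhaustive, separated filtration FA extending a filtration FK on K with nontrivial negative part (F_{-n}K ≠ 0 for all n ≥ 0). If M is an irreducible left FA-glider ideal that is not a left A-module, then M has infinite essential length: for every d ≥ 0 there exists n > d with M_n ⊋ M_{n+1}. -/
/-- A ℤ-filtration on a ring `A` by additive subgroups (= ℤ-submodules):
an ascending chain with `F n * F m ⊆ F (n+m)` and `1 ∈ F 0`. -/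
def IsZFiltrationOfRing {A : Type*} [Ring A] (F : ℤ → Submodule ℤ A) : Prop :=
  Monotone F ∧ (1 : A) ∈ F 0 ∧
    ∀ (n m : ℤ), ∀ x ∈ F n, ∀ y ∈ F m, x * y ∈ F (n + m)

/-!
If the chain `M` stabilises after `d`, then `M_{d+1}` is the body `B(M)`, and the body is stable
under left multiplication by `A` because the filtration is exhaustive. A nonzero `c ∈ F_{-d-1}K`
maps `M_0` into `M_{d+1} = B(M)`, and `c` is invertible in `K`, so `M_0 = c⁻¹ (c M_0) ⊆ B(M)`
is itself stable under `A`.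
-/

theorem gliderBody_eq_of_forall_not_lt {A : Type*} [Ring A] {M : ℕ → Submodule ℤ A}
    (hM : Antitone M) {d : ℕ} (hd : ∀ n, d < n → ¬ M (n + 1) < M n) :
    gliderBody M = M (d + 1) := by
  have hstab : ∀ n, d + 1 ≤ n → M n = M (d + 1) := by
    intro n hn
    induction n, hn using Nat.le_induction with
    | base => rfl
    | succ n hn ih =>
      rw [← ih]
      exact (hM n.le_succ).lt_or_eq.resolve_left (hd n hn)
  refine le_antisymm (iInf_le M (d + 1)) (le_iInf fun j => ?_)
  rcases le_total j (d + 1) with hj | hj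
  · exact hM hj
  · exact (hstab j hj).ge

namespace IsGlider

variable {A : Type*} [Ring A] {F : ℤ → Submodule ℤ A} {M : ℕ → Submodule ℤ A}

theorem mul_mem_of_mem_neg (hM : IsGlider F M) {a m : A} {j k : ℕ} (ha : a ∈ F (-k))
    (hm : m ∈ M j) : a * m ∈ M (j + k) := by
  have h := hM.2 (-k) j (by omega) a ha m hm
  rwa [show ((j : ℤ) - -(k : ℤ)).toNat = j + k by omega] at h

theorem mul_mem_gliderBody (hM : IsGlider F M) (hexh : ∀ a : A, ∃ n : ℤ, a ∈ F n) (a : A)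
    {b : A} (hb : b ∈ gliderBody M) : a * b ∈ gliderBody M := by
  obtain ⟨i, hi⟩ := hexh a
  refine Submodule.mem_iInf M |>.mpr fun t => ?_
  have h := hM.2 i (t + i.toNat) (by omega) a hi b (Submodule.mem_iInf M |>.mp hb _)
  exact hM.1 (by omega) h

theorem le_gliderBody_of_isUnit (hM : IsGlider F M) (hexh : ∀ a : A, ∃ n : ℤ, a ∈ F n)
    {d : ℕ} (hbody : gliderBody M = M (d + 1)) {u : A} (hu : IsUnit u)
    (huF : u ∈ F (-(d + 1 : ℕ))) : M 0 ≤ gliderBody M := by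
  intro m hm
  have hum : u * m ∈ M (0 + (d + 1)) := hM.mul_mem_of_mem_neg huF hm
  rw [zero_add, ← hbody] at hum
  simpa [← mul_assoc] using hM.mul_mem_gliderBody hexh (hu.unit⁻¹ : Aˣ) hum

end IsGlider

theorem stmt_10_general {K A : Type*} [Field K] [Ring A] [Algebra K A]
    (FA : ℤ → Submodule ℤ A) (FK : ℤ → Submodule ℤ K)
    (hexh : ∀ a : A, ∃ n : ℤ, a ∈ FA n)
    (hext : ∀ (n : ℤ) (x : K), algebraMap K A x ∈ FA n ↔ x ∈ FK n)
    (hneg : ∀ n : ℕ, FK (-(n : ℤ)) ≠ ⊥)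
    (M : ℕ → Submodule ℤ A)
    (hirr : IsIrreducibleGlider FA M)
    (hnotmod : ¬ ∀ a : A, ∀ m ∈ M 0, a * m ∈ M 0) :
    ∀ d : ℕ, ∃ n : ℕ, d < n ∧ M (n + 1) < M n := by
  intro d
  by_contra! hstable
  have hglider := hirr.1
  have hbody := gliderBody_eq_of_forall_not_lt hglider.1 hstable
  obtain ⟨c, hc, hc0⟩ := (Submodule.ne_bot_iff _).mp (hneg (d + 1))
  have hunit : IsUnit (algebraMap K A c) := (Ne.isUnit hc0).map _
  have hM0 := hglider.le_gliderBody_of_isUnit hexh hbody hunit ((hext _ c).mpr hc)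
  exact hnotmod fun a m hm => iInf_le M 0 (hglider.mul_mem_gliderBody hexh a (hM0 hm))

/-- Let `A` be a central simple algebra over a field `K` with an exhaustive, separated
filtration `FA` extending a filtration `FK` on `K` with nontrivial negative part.
If `M` is an irreducible left `FA`-glider ideal which is not a left `A`-module,
then `M` has infinite essential length. -/
theorem stmt_10 {K A : Type*} [Field K] [Ring A] [Algebra K A]
    [FiniteDimensional K A] [Algebra.IsCentral K A] [IsSimpleRing A]
    (FA : ℤ → Submodule ℤ A) (FK : ℤ → Submodule ℤ K)
    (hFA : IsZFiltrationOfRing FA)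
    (hexh : ∀ a : A, ∃ n : ℤ, a ∈ FA n)
    (hsep : ∀ a : A, (∀ n : ℤ, a ∈ FA n) → a = 0)
    (hext : ∀ (n : ℤ) (x : K), algebraMap K A x ∈ FA n ↔ x ∈ FK n)
    (hneg : ∀ n : ℕ, FK (-(n : ℤ)) ≠ ⊥)
    (M : ℕ → Submodule ℤ A)
    (hirr : IsIrreducibleGlider FA M)
    (hnotmod : ¬ ∀ a : A, ∀ m ∈ M 0, a * m ∈ M 0) :
    ∀ d : ℕ, ∃ n : ℕ, d < n ∧ M (n + 1) < M n :=
  stmt_10_general FA FK hexh hext hneg M hirr hnotmod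
end

section
/- Let A be a central simple K-algebra with filtration FA extending FK (nontrivial negative part), and let M be an irreducible left FA-glider ideal of infinite essential length. If N = M_i is a left A-module for some i ∈ ℕ, then M_i = M, i.e., the whole glider M is a left A-module. -/
/-- A ℤ-filtration on a ring `A` by additive subgroups (= ℤ-submodules):
an ascending chain with `F n * F m ⊆ F (n+m)` and `1 ∈ F 0`. -/
def IsZFiltration {A : Type*} [Ring A] (F : ℤ → Submodule ℤ A) : Prop :=
  Monotone F ∧ (1 : A) ∈ F 0 ∧
    ∀ (n m : ℤ), ∀ x ∈ F n, ∀ y ∈ F m, x * y ∈ F (n + m)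

/-!
Multiplying by a nonzero scalar `λ ∈ FK₋ᵢ` maps `M₀` into `Mᵢ`, by the glider condition.
Since `λ` is invertible in `A` and `Mᵢ` is an `A`-module, `m = λ⁻¹ (λ m) ∈ Mᵢ` for every
`m ∈ M₀`.
-/

namespace IsGlider

variable {A : Type*} [Ring A] {F : ℤ → Submodule ℤ A} {M : ℕ → Submodule ℤ A}

theorem mul_mem_add (hM : IsGlider F M) {j k : ℕ} {a m : A} (ha : a ∈ F (-k))
    (hm : m ∈ M j) : a * m ∈ M (j + k) := by
  have h := hM.2 (-k) j (by omega) a ha m hm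
  rwa [show ((j : ℤ) - -(k : ℤ)).toNat = j + k by omega] at h

theorem le_of_isUnit_mem (hM : IsGlider F M) {j k : ℕ} {u : A} (hu : IsUnit u)
    (huF : u ∈ F (-k)) (hmod : ∀ a : A, ∀ m ∈ M (j + k), a * m ∈ M (j + k)) :
    M j ≤ M (j + k) := by
  intro m hm
  have hum : u * m ∈ M (j + k) := hM.mul_mem_add huF hm
  simpa [← mul_assoc] using hmod (↑hu.unit⁻¹) _ hum

end IsGlider

theorem stmt_11_general {K A : Type*} [Field K] [Ring A] [Algebra K A]
    (FA : ℤ → Submodule ℤ A) (FK : ℤ → Submodule ℤ K)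
    (hext : ∀ (n : ℤ) (x : K), algebraMap K A x ∈ FA n ↔ x ∈ FK n)
    (hneg : ∀ n : ℕ, FK (-(n : ℤ)) ≠ ⊥)
    (M : ℕ → Submodule ℤ A)
    (hirr : IsIrreducibleGlider FA M)
    (i : ℕ) (hmod : ∀ a : A, ∀ m ∈ M i, a * m ∈ M i) :
    M i = M 0 := by
  have hM : IsGlider FA M := hirr.1
  obtain ⟨lam, hlam, hlam0⟩ := Submodule.exists_mem_ne_zero_of_ne_bot (hneg i)
  have hunit : IsUnit (algebraMap K A lam) := (Ne.isUnit hlam0).map _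
  refine le_antisymm (hM.1 (Nat.zero_le i)) ?_
  simpa using hM.le_of_isUnit_mem (j := 0) hunit ((hext _ _).2 hlam) (by simpa using hmod)

/-- Let `A` be a central simple `K`-algebra with filtration `FA` extending `FK`
(nontrivial negative part), and `M` an irreducible left `FA`-glider ideal of infinite
essential length. If `M i` is a left `A`-module for some `i`, then `M i = M 0`. -/
theorem stmt_11 {K A : Type*} [Field K] [Ring A] [Algebra K A]
    [FiniteDimensional K A] [Algebra.IsCentral K A] [IsSimpleRing A]
    (FA : ℤ → Submodule ℤ A) (FK : ℤ → Submodule ℤ K)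
    (hFA : IsZFiltration FA)
    (hexh : ∀ a : A, ∃ n : ℤ, a ∈ FA n)
    (hsep : ∀ a : A, (∀ n : ℤ, a ∈ FA n) → a = 0)
    (hext : ∀ (n : ℤ) (x : K), algebraMap K A x ∈ FA n ↔ x ∈ FK n)
    (hneg : ∀ n : ℕ, FK (-(n : ℤ)) ≠ ⊥)
    (M : ℕ → Submodule ℤ A)
    (hirr : IsIrreducibleGlider FA M)
    (hinf : ∀ d : ℕ, ∃ n : ℕ, d ≤ n ∧ M (n + 1) < M n)
    (i : ℕ) (hmod : ∀ a : A, ∀ m ∈ M i, a * m ∈ M i) :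
    M i = M 0 :=
  stmt_11_general FA FK hext hneg M hirr i hmod
end

section
/- Let M be an irreducible FA-glider of infinite essential length. Then for every i ≥ 0, either M_i = M_{i+1} or the quotient M_i/M_{i+1} is a simple left F_0A-module. -/
/-- A ℤ-filtration on a ring `A` by additive subgroups (= ℤ-submodules):
an ascending chain with `F n * F m ⊆ F (n+m)` and `1 ∈ F 0`. -/
def IsFiltrationZ {A : Type*} [Ring A] (F : ℤ → Submodule ℤ A) : Prop :=
  Monotone F ∧ (1 : A) ∈ F 0 ∧
    ∀ (n m : ℤ), ∀ x ∈ F n, ∀ y ∈ F m, x * y ∈ F (n + m)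

/-!
An `F₀`-submodule `N` strictly between `M (i+1)` and `M i` generates the subglider
`S k = F (i - k) N + M (i + 1 + k)` of `M`, with `S i = N`. Since `S` contains a shift of `M`,
infinite essential length rules out the trivial types T1 and T2; and `N` is no term of `M`,
which rules out T3. This contradicts irreducibility.
-/

theorem Antitone.ne_of_lt_of_lt_succ {α : Type*} [Preorder α] {f : ℕ → α} (hf : Antitone f)
    {a : α} {i : ℕ} (hlow : f (i + 1) < a) (hup : a < f i) (j : ℕ) : a ≠ f j := by
  rintro rfl
  rcases le_or_gt j i with h | h
  · exact (hf h).not_gt hup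
  · exact (hf (Nat.succ_le_of_lt h)).not_gt hlow

section

variable {A : Type*} [Ring A] {F : ℤ → Submodule ℤ A} {M : ℕ → Submodule ℤ A}

theorem IsFiltrationZ.mul_le (hF : IsFiltrationZ F) (n m : ℤ) : F n * F m ≤ F (n + m) :=
  Submodule.mul_le.2 (hF.2.2 n m)

theorem IsGlider.mul_le (hM : IsGlider F M) {i : ℤ} {j : ℕ} (hij : i ≤ j) :
    F i * M j ≤ M (j - i).toNat :=
  Submodule.mul_le.2 (hM.2 i j hij)

theorem isGlider_of_mul_le (hanti : Antitone M)
    (hmul : ∀ (i : ℤ) (j : ℕ), i ≤ j → F i * M j ≤ M (j - i).toNat) : IsGlider F M :=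
  ⟨hanti, fun i j hij _ ha _ hm => hmul i j hij (Submodule.mul_mem_mul ha hm)⟩

def subgliderThrough (F : ℤ → Submodule ℤ A) (M : ℕ → Submodule ℤ A) (N : Submodule ℤ A)
    (i k : ℕ) : Submodule ℤ A :=
  F (i - k) * N ⊔ M (i + 1 + k)

theorem subgliderThrough_isGlider (hF : IsFiltrationZ F) (hM : IsGlider F M)
    (N : Submodule ℤ A) (i : ℕ) : IsGlider F (subgliderThrough F M N i) := by
  refine isGlider_of_mul_le (fun k l hkl => ?_) (fun i' j hij => ?_)
  · exact sup_le_sup (mul_le_mul' (hF.1 (by omega)) le_rfl) (hM.1 (by omega))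
  · have hF' : F i' * F (i - j) ≤ F (i - (j - i').toNat) :=
      (hF.mul_le _ _).trans (hF.1 (by omega))
    have hM' : F i' * M (i + 1 + j) ≤ M (i + 1 + (j - i').toNat) := by
      have h := hM.mul_le (i := i') (j := i + 1 + j) (by push_cast; omega)
      rwa [show ((i + 1 + j : ℕ) - i').toNat = i + 1 + (j - i').toNat by omega] at h
    rw [subgliderThrough, Submodule.mul_sup, ← mul_assoc]
    exact sup_le_sup (mul_le_mul' hF' le_rfl) hM'

theorem subgliderThrough_le (hM : IsGlider F M) {N : Submodule ℤ A}
    {i : ℕ} (hN : N ≤ M i) (k : ℕ) : subgliderThrough F M N i k ≤ M k := by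
  refine sup_le ?_ (hM.1 (by omega))
  calc F (i - k) * N ≤ F (i - k) * M i := mul_le_mul' le_rfl hN
    _ ≤ M (i - (i - k : ℤ)).toNat := hM.mul_le (by omega)
    _ = M k := by rw [show ((i : ℤ) - (i - k)).toNat = k by omega]

theorem subgliderThrough_self (hF : IsFiltrationZ F) (hM : Antitone M) {N : Submodule ℤ A}
    {i : ℕ} (hN : F 0 * N ≤ N) (hMN : M (i + 1) ≤ N) : subgliderThrough F M N i i = N := by
  rw [subgliderThrough, sub_self]
  refine le_antisymm (sup_le hN ((hM (by omega)).trans hMN)) (le_sup_of_le_left ?_)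
  calc N = 1 * N := (one_mul N).symm
    _ ≤ F 0 * N := mul_le_mul' (Submodule.one_le.2 hF.2.1) le_rfl

theorem IsTrivialSubglider.exists_eq_of_shift_le {S : ℕ → Submodule ℤ A}
    (hinf : ∀ d : ℕ, ∃ n : ℕ, d ≤ n ∧ M (n + 1) < M n) (hM : Antitone M)
    (hSM : ∀ k, S k ≤ M k) {c : ℕ} (hMS : ∀ k, M (c + k) ≤ S k)
    (htriv : IsTrivialSubglider M S) (k : ℕ) : ∃ j, S k = M j := by
  rcases htriv with ⟨n, hn, -⟩ | ⟨n, hn, -⟩ | ⟨α, -, hα, -⟩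
  · obtain ⟨m, hm, hlt⟩ := hinf (c + n)
    refine absurd ?_ hlt.not_ge
    calc M m ≤ M (c + n) := hM hm
      _ ≤ S n := hMS n
      _ = gliderBody S := hn
      _ ≤ S (m + 1) := iInf_le S (m + 1)
      _ ≤ M (m + 1) := hSM (m + 1)
  · obtain ⟨m, hm, hlt⟩ := hinf (c + n)
    have hbot : M m ≤ ⊥ := hn ▸ (hM hm).trans (hMS n)
    exact absurd (hlt.trans_le hbot) not_lt_bot
  · exact ⟨α k, hα k⟩

end

/-- Let `M` be an irreducible `FA`-glider of infinite essential length. Then for every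
`i`, either `M i = M (i+1)` or the quotient `M i / M (i+1)` is a simple left
`F 0`-module (expressed as: there is no strictly intermediate `F 0`-stable subgroup). -/
theorem stmt_12 {A : Type*} [Ring A] (F : ℤ → Submodule ℤ A)
    (hF : IsFiltrationZ F)
    (M : ℕ → Submodule ℤ A)
    (hirr : IsIrreducibleGlider F M)
    (hinf : ∀ d : ℕ, ∃ n : ℕ, d ≤ n ∧ M (n + 1) < M n) :
    ∀ i : ℕ, M i = M (i + 1) ∨
      (M (i + 1) ≠ M i ∧
        ∀ N : Submodule ℤ A, (∀ b ∈ F 0, ∀ m ∈ N, b * m ∈ N) →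
          M (i + 1) ≤ N → N ≤ M i → N = M (i + 1) ∨ N = M i) := by
  intro i
  refine or_iff_not_imp_left.2 fun hne => ⟨Ne.symm hne, fun N hNstab hlow hup => ?_⟩
  by_contra! hmid
  obtain ⟨hM, hsub⟩ := hirr
  have hSM := subgliderThrough_le hM hup
  have htriv := hsub _ (subgliderThrough_isGlider hF hM N i) hSM
  obtain ⟨j, hj⟩ := htriv.exists_eq_of_shift_le hinf hM.1 hSM (c := i + 1)
    (fun k => le_sup_right) i
  rw [subgliderThrough_self hF hM.1 (Submodule.mul_le.2 hNstab) hlow] at hj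
  exact hM.1.ne_of_lt_of_lt_succ (hlow.lt_of_ne hmid.1.symm) (hup.lt_of_ne hmid.2) j hj
end

section
/- Let A be a ring with ℤ-filtration FA extending FK (F_nA ∩ K = F_nK) where FK is strong. If L/K is a field extension with filtration FL extending FK, define f_q(A ⊗_K L) = Σ_{k ≤ q} F_kA ⊗ F_{q-k}L (additive subgroups inside A ⊗_K L). Then f(A ⊗_K L) is a ring filtration: f_p·f_q ⊆ f_{p+q} for all p, q ∈ ℤ, and when FK is strong one has f_n(A ⊗_K L) = F_nA ⊗ F_0L for all n. -/
open scoped TensorProduct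

/-- The tensor product filtration `f_q(A ⊗_K L) = Σ_{k ≤ q} F_k A ⊗ F_{q-k} L`. -/
def tensorFiltPiece {K A L : Type*} [Field K] [Ring A] [Algebra K A]
    [Field L] [Algebra K L]
    (FA : ℤ → Submodule ℤ A) (FL : ℤ → Submodule ℤ L) (q : ℤ) :
    Submodule ℤ (A ⊗[K] L) :=
  Submodule.span ℤ
    {z : A ⊗[K] L | ∃ k : ℤ, k ≤ q ∧ ∃ a ∈ FA k, ∃ l ∈ FL (q - k), z = a ⊗ₜ[K] l}

/-- Let `FA` be a filtration on a `K`-algebra `A` and `FL` a filtration on a field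
extension `L/K`, both extending a strong filtration `FK` on `K`. Then
`f_q(A ⊗_K L) = Σ_{k ≤ q} F_k A ⊗ F_{q-k} L` is a ring filtration, and (since `FK` is
strong) `f_n(A ⊗_K L) = F_n A ⊗ F_0 L` for all `n`. -/
theorem stmt_18 {K A L : Type*} [Field K] [Ring A] [Algebra K A]
    [Field L] [Algebra K L]
    (FK : ℤ → Submodule ℤ K) (FA : ℤ → Submodule ℤ A) (FL : ℤ → Submodule ℤ L)
    (hKmono : Monotone FK) (hKone : (1 : K) ∈ FK 0)
    (hKmul : ∀ n m : ℤ, ∀ x ∈ FK n, ∀ y ∈ FK m, x * y ∈ FK (n + m))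
    (hAmono : Monotone FA) (hAone : (1 : A) ∈ FA 0)
    (hAmul : ∀ n m : ℤ, ∀ x ∈ FA n, ∀ y ∈ FA m, x * y ∈ FA (n + m))
    (hLmono : Monotone FL) (hLone : (1 : L) ∈ FL 0)
    (hLmul : ∀ n m : ℤ, ∀ x ∈ FL n, ∀ y ∈ FL m, x * y ∈ FL (n + m))
    (hextA : ∀ (n : ℤ) (x : K), algebraMap K A x ∈ FA n ↔ x ∈ FK n)
    (hextL : ∀ (n : ℤ) (x : K), algebraMap K L x ∈ FL n ↔ x ∈ FK n)
    (hstrong : ∀ n : ℤ, 0 ≤ n → FK n * FK (-n) = FK 0) :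
    (∀ p q : ℤ, ∀ x ∈ tensorFiltPiece (K := K) FA FL p,
        ∀ y ∈ tensorFiltPiece (K := K) FA FL q,
          x * y ∈ tensorFiltPiece (K := K) FA FL (p + q)) ∧
    (∀ n : ℤ, tensorFiltPiece (K := K) FA FL n =
        Submodule.span ℤ {z : A ⊗[K] L | ∃ a ∈ FA n, ∃ l ∈ FL 0, z = a ⊗ₜ[K] l}) := by
  constructor
  · intro p q x hx y hy
    induction hx using Submodule.span_induction with
    | mem x hxmem =>
      induction hy using Submodule.span_induction with
      | mem y hymem =>
        obtain ⟨k, hk, a, ha, l, hl, rfl⟩ := hxmem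
        obtain ⟨k', hk', a', ha', l', hl', rfl⟩ := hymem
        rw [Algebra.TensorProduct.tmul_mul_tmul]
        apply Submodule.subset_span
        refine ⟨k + k', by omega, a * a', hAmul _ _ _ ha _ ha', l * l', ?_, rfl⟩
        have h := hLmul _ _ _ hl _ hl'
        have : p - k + (q - k') = p + q - (k + k') := by omega
        rwa [this] at h
      | zero => rw [mul_zero]; exact zero_mem _
      | add y₁ y₂ _ _ h1 h2 => rw [mul_add]; exact add_mem h1 h2
      | smul z y _ h => rw [mul_smul_comm]; exact Submodule.smul_mem _ _ h
    | zero => rw [zero_mul]; exact zero_mem _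
    | add x₁ x₂ _ _ h1 h2 => rw [add_mul]; exact add_mem h1 h2
    | smul z x _ h => rw [smul_mul_assoc]; exact Submodule.smul_mem _ _ h
  · intro n
    apply le_antisymm
    · apply Submodule.span_le.mpr
      rintro z ⟨k, hk, a, ha, l, hl, rfl⟩
      have h1 : (1 : K) ∈ FK (n - k) * FK (-(n - k)) := by
        rw [hstrong (n - k) (by omega)]; exact hKone
      have key : ∀ c ∈ FK (n - k) * FK (-(n - k)),
          c • (a ⊗ₜ[K] l) ∈ Submodule.span ℤ
            {z : A ⊗[K] L | ∃ a ∈ FA n, ∃ l ∈ FL 0, z = a ⊗ₜ[K] l} := by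
        intro c hc
        refine Submodule.mul_induction_on hc ?_ ?_
        · intro x hx y hy
          have heq : (x * y) • (a ⊗ₜ[K] l) = (x • a) ⊗ₜ[K] (y • l) := by
            rw [mul_comm, mul_smul, TensorProduct.smul_tmul', TensorProduct.smul_tmul',
              TensorProduct.smul_tmul]
          rw [heq]
          apply Submodule.subset_span
          refine ⟨x • a, ?_, y • l, ?_, rfl⟩
          · have := hAmul _ _ _ ((hextA _ x).mpr hx) _ ha
            rw [← Algebra.smul_def] at this
            have e : n - k + k = n := by omega
            rwa [e] at this
          · have := hLmul _ _ _ ((hextL _ y).mpr hy) _ hl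
            rw [← Algebra.smul_def] at this
            have e : -(n - k) + (n - k) = 0 := by omega
            rwa [e] at this
        · intro c₁ c₂ h1 h2
          rw [add_smul]
          exact add_mem h1 h2
      have := key 1 h1
      rwa [one_smul] at this
    · apply Submodule.span_le.mpr
      rintro z ⟨a, ha, l, hl, rfl⟩
      apply Submodule.subset_span
      exact ⟨n, le_refl n, a, ha, l, by rw [sub_self]; exact hl, rfl⟩
end

section
/- Let M ⊇ M_1 ⊇ ... be a left FA-glider in an A-module Ω, L/K a field extension with filtration FL, and f(A⊗_K L) the tensor product filtration f_q = Σ_{k≤q} F_kA ⊗ F_{q-k}L. Then the chain (M ⊗ L)_p := Σ_{i ≥ p} M_i ⊗ F_{i-p}L inside Ω ⊗_K L is a left f(A⊗_K L)-glider: f_j(A⊗_K L)·(M⊗L)_i ⊆ (M⊗L)_{i-j} for all j ≤ i. -/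
open scoped TensorProduct

/-- A left `FA`-glider inside an `A`-module `Ω`. -/
def IsGliderMod {K A Ω : Type*} [Field K] [Ring A] [Algebra K A]
    [AddCommGroup Ω] [Module K Ω] [Module A Ω]
    (FA : ℤ → Submodule ℤ A) (M : ℕ → Submodule ℤ Ω) : Prop :=
  Antitone M ∧
    ∀ (i : ℤ) (j : ℕ), i ≤ (j : ℤ) →
      ∀ a ∈ FA i, ∀ m ∈ M j, a • m ∈ M ((j : ℤ) - i).toNat

/-- The `K`-linear map `A →ₗ[K] End(Ω)` given by the `A`-action on `Ω`. -/
def smulEnd (K : Type*) {A : Type*} (Ω : Type*) [Field K] [Ring A] [Algebra K A]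
    [AddCommGroup Ω] [Module K Ω] [Module A Ω] [IsScalarTower K A Ω]
    [SMulCommClass K A Ω] : A →ₗ[K] (Ω →ₗ[K] Ω) where
  toFun a :=
    { toFun := fun m => a • m
      map_add' := fun m m' => smul_add a m m'
      map_smul' := fun c m => (smul_comm c a m).symm }
  map_add' a b := LinearMap.ext fun m => add_smul a b m
  map_smul' c a := LinearMap.ext fun m => smul_assoc c a m

/-- The action of `A ⊗_K L` on `Ω ⊗_K L`, by `(a ⊗ l) • (m ⊗ t) = (a • m) ⊗ (l * t)`. -/
noncomputable def gliderAct (K : Type*) {A L Ω : Type*} [Field K] [Ring A] [Algebra K A]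
    [Field L] [Algebra K L] [AddCommGroup Ω] [Module K Ω] [Module A Ω]
    [IsScalarTower K A Ω] [SMulCommClass K A Ω] :
    (A ⊗[K] L) →ₗ[K] ((Ω ⊗[K] L) →ₗ[K] (Ω ⊗[K] L)) :=
  (TensorProduct.homTensorHomMap (RingHom.id K) Ω L Ω L).comp
    (TensorProduct.map (smulEnd K Ω) (LinearMap.mul K L))

/-- The tensor product glider chain `(M ⊗ L)_p = Σ_{i ≥ p} M_i ⊗ F_{i-p} L`. -/
def gliderTensor {K L Ω : Type*} [Field K] [Field L] [Algebra K L]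
    [AddCommGroup Ω] [Module K Ω]
    (M : ℕ → Submodule ℤ Ω) (FL : ℤ → Submodule ℤ L) (p : ℕ) :
    Submodule ℤ (Ω ⊗[K] L) :=
  Submodule.span ℤ
    {z : Ω ⊗[K] L | ∃ i : ℕ, p ≤ i ∧ ∃ m ∈ M i, ∃ l ∈ FL ((i : ℤ) - (p : ℤ)),
      z = m ⊗ₜ[K] l}

/-!
Both `f_j(A ⊗ L)` and `(M ⊗ L)_i` are `ℤ`-spans of pure tensors and the action is biadditive,
so it suffices to check generators: for `a ∈ F_k A`, `l ∈ F_{j-k} L`, `m ∈ M_n`, `t ∈ F_{n-i} L`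
we get `(a ⊗ l) • (m ⊗ t) = a m ⊗ l t` with `a m ∈ M_{n-k}` by the glider property and
`l t ∈ F_{(j-k)+(n-i)} L = F_{(n-k)-(i-j)} L`, a generator of `(M ⊗ L)_{i-j}`.
-/

section

variable {K A L Ω : Type*} [Field K] [Ring A] [Algebra K A] [Field L] [Algebra K L]
  [AddCommGroup Ω] [Module K Ω] [Module A Ω] [IsScalarTower K A Ω] [SMulCommClass K A Ω]

theorem gliderAct_tmul_tmul (a : A) (l : L) (m : Ω) (t : L) :
    gliderAct K (a ⊗ₜ[K] l) (m ⊗ₜ[K] t) = (a • m) ⊗ₜ[K] (l * t) := by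
  simp [gliderAct, smulEnd]

theorem tmul_mem_gliderTensor {M : ℕ → Submodule ℤ Ω} {FL : ℤ → Submodule ℤ L}
    {p n : ℕ} (hpn : p ≤ n) {m : Ω} (hm : m ∈ M n) {l : L} (hl : l ∈ FL ((n : ℤ) - p)) :
    m ⊗ₜ[K] l ∈ gliderTensor (K := K) M FL p :=
  Submodule.subset_span ⟨n, hpn, m, hm, l, hl, rfl⟩

theorem gliderAct_tmul_tmul_mem_gliderTensor {FA : ℤ → Submodule ℤ A} {FL : ℤ → Submodule ℤ L}
    (hLmul : ∀ n m : ℤ, ∀ x ∈ FL n, ∀ y ∈ FL m, x * y ∈ FL (n + m))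
    {M : ℕ → Submodule ℤ Ω} (hM : IsGliderMod (K := K) FA M)
    {j i n : ℕ} (hji : j ≤ i) (hin : i ≤ n) {k : ℤ} (hkj : k ≤ j)
    {a : A} (ha : a ∈ FA k) {l : L} (hl : l ∈ FL (j - k))
    {m : Ω} (hm : m ∈ M n) {t : L} (ht : t ∈ FL (n - i)) :
    gliderAct K (a ⊗ₜ[K] l) (m ⊗ₜ[K] t) ∈ gliderTensor (K := K) M FL (i - j) := by
  rw [gliderAct_tmul_tmul]
  have hdeg : ((n - k).toNat : ℤ) - (i - j : ℕ) = (j - k) + (n - i) := by omega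
  refine tmul_mem_gliderTensor (by omega) (hM.2 k n (by omega) a ha m hm) ?_
  rw [hdeg]
  exact hLmul _ _ l hl t ht

end

theorem stmt_19_general {K A L Ω : Type*} [Field K] [Ring A] [Algebra K A]
    [Field L] [Algebra K L] [AddCommGroup Ω] [Module K Ω] [Module A Ω]
    [IsScalarTower K A Ω] [SMulCommClass K A Ω]
    (FA : ℤ → Submodule ℤ A) (FL : ℤ → Submodule ℤ L)
    (hLmul : ∀ n m : ℤ, ∀ x ∈ FL n, ∀ y ∈ FL m, x * y ∈ FL (n + m))
    (M : ℕ → Submodule ℤ Ω) (hM : IsGliderMod (K := K) FA M) :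
    ∀ (j i : ℕ), j ≤ i →
      ∀ x ∈ tensorFiltPiece (K := K) FA FL (j : ℤ),
        ∀ w ∈ gliderTensor (K := K) M FL i,
          gliderAct K x w ∈ gliderTensor (K := K) M FL (i - j) := by
  intro j i hji
  refine (Submodule.map₂_le (f := (gliderAct K).restrictScalars₁₂ ℤ ℤ)).1 ?_
  rw [tensorFiltPiece, gliderTensor, Submodule.map₂_span_span, Submodule.span_le,
    Set.image2_subset_iff]
  rintro _ ⟨k, hkj, a, ha, l, hl, rfl⟩ _ ⟨n, hin, m, hm, t, ht, rfl⟩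
  exact gliderAct_tmul_tmul_mem_gliderTensor hLmul hM hji hin hkj ha hl hm ht

/-- Let `M` be a left `FA`-glider in an `A`-module `Ω` and `L/K` a field extension with
filtration `FL`. Then `(M ⊗ L)_p = Σ_{i ≥ p} M_i ⊗ F_{i-p} L` is a left glider for the
tensor product filtration `f(A ⊗_K L)`: `f_j · (M ⊗ L)_i ⊆ (M ⊗ L)_{i-j}` for `j ≤ i`. -/
theorem stmt_19 {K A L Ω : Type*} [Field K] [Ring A] [Algebra K A]
    [Field L] [Algebra K L] [AddCommGroup Ω] [Module K Ω] [Module A Ω]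
    [IsScalarTower K A Ω] [SMulCommClass K A Ω]
    (FK : ℤ → Submodule ℤ K) (FA : ℤ → Submodule ℤ A) (FL : ℤ → Submodule ℤ L)
    (hKmono : Monotone FK) (hKone : (1 : K) ∈ FK 0)
    (hKmul : ∀ n m : ℤ, ∀ x ∈ FK n, ∀ y ∈ FK m, x * y ∈ FK (n + m))
    (hAmono : Monotone FA) (hAone : (1 : A) ∈ FA 0)
    (hAmul : ∀ n m : ℤ, ∀ x ∈ FA n, ∀ y ∈ FA m, x * y ∈ FA (n + m))
    (hLmono : Monotone FL) (hLone : (1 : L) ∈ FL 0)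
    (hLmul : ∀ n m : ℤ, ∀ x ∈ FL n, ∀ y ∈ FL m, x * y ∈ FL (n + m))
    (hextA : ∀ (n : ℤ) (x : K), algebraMap K A x ∈ FA n ↔ x ∈ FK n)
    (hextL : ∀ (n : ℤ) (x : K), algebraMap K L x ∈ FL n ↔ x ∈ FK n)
    (M : ℕ → Submodule ℤ Ω) (hM : IsGliderMod (K := K) FA M) :
    ∀ (j i : ℕ), j ≤ i →
      ∀ x ∈ tensorFiltPiece (K := K) FA FL (j : ℤ),
        ∀ w ∈ gliderTensor (K := K) M FL i,
          gliderAct K x w ∈ gliderTensor (K := K) M FL (i - j) :=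
  stmt_19_general FA FL hLmul M hM
end
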